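/- arXiv:2601.05028 — 2 statements merged into one kernel-verified Lean document; each statement's English description precedes it below -/
import Mathlib

section
/- Let G be a compact group with normalized Haar measure λ, and let π, π' be continuous finite-dimensional unitary representations of G on V, V'. Let T : V → V' be continuous, with G-smoothing P(T)(v) = ∫_G π'(g)* T(π(g) v) dλ(g) and defect Δ_g(T) = π'(g) ∘ T − T ∘ π(g). If there is K ≥ 0 such that for every g ∈ G the map Δ_g(T) is Lipschitz with constant K, then T − P(T) is Lipschitz with constant K. (Lower half of Lemma 3.2: ‖T − P(T)‖ ≤ sup_g ‖Δ_g(T)‖ in Lipschitz seminorm.) -/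
open MeasureTheory
open scoped NNReal

/-! Since `π'(g)*` is an isometry inverse to `π'(g)` and `μ` is a probability measure,
`T v - P(T) v = ∫ π'(g)* (Δ_g(T) v) dμ(g)`, an average of `K`-Lipschitz maps of `v`;
such an average is again `K`-Lipschitz. -/

section LipschitzIntegral

variable {α E F : Type*} [MeasurableSpace α] {μ : Measure α} [IsProbabilityMeasure μ]
  [PseudoMetricSpace E] [NormedAddCommGroup F] [NormedSpace ℝ F]

theorem integral_const_sub_of_integrable [CompleteSpace F] {f : α → F} (hf : Integrable f μ)
    (c : F) : ∫ a, (c - f a) ∂μ = c - ∫ a, f a ∂μ := by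
  rw [integral_sub (integrable_const c) hf, integral_const, probReal_univ, one_smul]

theorem LipschitzWith.integral {K : ℝ≥0} {f : α → E → F} (hf : ∀ a, LipschitzWith K (f a))
    (hint : ∀ x, Integrable (fun a => f a x) μ) :
    LipschitzWith K fun x => ∫ a, f a x ∂μ := by
  refine LipschitzWith.of_dist_le_mul fun x y => ?_
  have hpointwise : ∀ a, ‖f a x - f a y‖ ≤ K * dist x y := fun a => by
    simpa only [dist_eq_norm] using (hf a).dist_le_mul x y
  calc dist (∫ a, f a x ∂μ) (∫ a, f a y ∂μ)
      = ‖∫ a, (f a x - f a y) ∂μ‖ := by rw [dist_eq_norm, integral_sub (hint x) (hint y)]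
    _ ≤ K * dist x y * μ.real Set.univ :=
        norm_integral_le_of_norm_le_const (Filter.Eventually.of_forall hpointwise)
    _ = K * dist x y := by rw [probReal_univ, mul_one]

end LipschitzIntegral

theorem LipschitzWith.sub_star_comp_of_mem_unitary {𝕜 E F : Type*} [RCLike 𝕜]
    [PseudoMetricSpace E] [NormedAddCommGroup F] [InnerProductSpace 𝕜 F] [CompleteSpace F]
    {u : F →L[𝕜] F} (hu : u ∈ unitary (F →L[𝕜] F)) {K : ℝ≥0} {S T : E → F}
    (h : LipschitzWith K fun v => u (T v) - S v) :
    LipschitzWith K fun v => T v - star u (S v) := by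
  have hstar : Isometry ⇑(star u) := AddMonoidHomClass.isometry_of_norm _
    (ContinuousLinearMap.norm_map_of_mem_unitary (Unitary.star_mem hu))
  have hcancel : ∀ x, star u (u x) = x := fun x => by
    rw [← mul_apply_eq_comp, Unitary.star_mul_self_of_mem hu, one_apply_eq_self]
  simpa only [one_mul, Function.comp_def, map_sub, hcancel] using hstar.lipschitz.comp h

theorem defect_controls_projection_general
    {G : Type*} [Group G] [TopologicalSpace G]
    [CompactSpace G] [MeasurableSpace G] [BorelSpace G]
    (μ : Measure G) [IsProbabilityMeasure μ]
    {V V' : Type*}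
    [NormedAddCommGroup V] [InnerProductSpace ℂ V]
    [NormedAddCommGroup V'] [InnerProductSpace ℂ V'] [FiniteDimensional ℂ V']
    (π : G →* (V →L[ℂ] V)) (π' : G →* (V' →L[ℂ] V'))
    (hπc : Continuous fun g => π g) (hπ'c : Continuous fun g => π' g)
    (hπ'u : ∀ g, π' g ∈ unitary (V' →L[ℂ] V'))
    (T : V → V') (hT : Continuous T)
    (K : ℝ≥0)
    (hK : ∀ g : G, LipschitzWith K fun v => π' g (T v) - T (π g v)) :
    LipschitzWith K fun v => T v - ∫ g, star (π' g) (T (π g v)) ∂μ := by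
  have hint : ∀ v, Integrable (fun g => star (π' g) (T (π g v))) μ := fun v =>
    ((continuous_star.comp hπ'c).clm_apply (hT.comp (hπc.clm_apply continuous_const))
      ).integrable_of_hasCompactSupport (HasCompactSupport.of_compactSpace _)
  have hsmoothed : (fun v => T v - ∫ g, star (π' g) (T (π g v)) ∂μ) =
      fun v => ∫ g, (T v - star (π' g) (T (π g v))) ∂μ :=
    funext fun v => (integral_const_sub_of_integrable (hint v) (T v)).symm
  rw [hsmoothed]
  exact LipschitzWith.integral (fun g => (hK g).sub_star_comp_of_mem_unitary (hπ'u g))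
    fun v => (integrable_const (T v)).sub (hint v)

/-- lower half of Lemma 3.2.  Let `T : V → V'` be continuous, with
`G`-smoothing `P(T) v = ∫ g, π'(g)* (T (π g v)) dμ(g)` and defect
`Δ_g(T) = π'(g) ∘ T − T ∘ π(g)`.  If every `Δ_g(T)` is `K`-Lipschitz, then `T − P(T)` is
`K`-Lipschitz. -/
theorem defect_controls_projection
    {G : Type*} [Group G] [TopologicalSpace G] [IsTopologicalGroup G]
    [CompactSpace G] [MeasurableSpace G] [BorelSpace G]
    (μ : Measure G) [μ.IsHaarMeasure] [IsProbabilityMeasure μ]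
    {V V' : Type*}
    [NormedAddCommGroup V] [InnerProductSpace ℂ V] [FiniteDimensional ℂ V]
    [NormedAddCommGroup V'] [InnerProductSpace ℂ V'] [FiniteDimensional ℂ V']
    (π : G →* (V →L[ℂ] V)) (π' : G →* (V' →L[ℂ] V'))
    (hπc : Continuous fun g => π g) (hπ'c : Continuous fun g => π' g)
    (hπu : ∀ g, π g ∈ unitary (V →L[ℂ] V))
    (hπ'u : ∀ g, π' g ∈ unitary (V' →L[ℂ] V'))
    (T : V → V') (hT : Continuous T)
    (K : ℝ≥0)
    (hK : ∀ g : G, LipschitzWith K fun v => π' g (T v) - T (π g v)) :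
    LipschitzWith K fun v => T v - ∫ g, star (π' g) (T (π g v)) ∂μ :=
  defect_controls_projection_general μ π π' hπc hπ'c hπ'u T hT K hK
end

section
/- Let G be a compact group with normalized Haar measure λ, and let π, π' be continuous finite-dimensional unitary representations of G on V, V'. Let T : V → V' be continuous, with G-smoothing P(T)(v) = ∫_G π'(g)* T(π(g) v) dλ(g) and defect Δ_g(T) = π'(g) ∘ T − T ∘ π(g). If T − P(T) is Lipschitz with constant K, then for every g ∈ G the map Δ_g(T) is Lipschitz with constant 2K. (Upper half of Lemma 3.2: sup_g ‖Δ_g(T)‖ ≤ 2 ‖T − P(T)‖ in Lipschitz seminorm.) -/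
/-!
A Haar probability measure is right invariant, so substituting `h ↦ h g` in the integral shows
that the smoothing `P(T)` is equivariant. The defect `Δ_g` is additive in `T` and vanishes on
equivariant maps, hence `Δ_g(T) = Δ_g(T - P(T)) = π' g ∘ (T - P(T)) - (T - P(T)) ∘ π g`, and the
unitaries `π g`, `π' g` are isometries.
-/

open MeasureTheory
open scoped NNReal

lemma MeasureTheory.Measure.isMulRightInvariant_of_isProbabilityMeasure
    {G : Type*} [Group G] [TopologicalSpace G] [IsTopologicalGroup G] [LocallyCompactSpace G]
    [MeasurableSpace G] [BorelSpace G] (μ : Measure G) [μ.IsHaarMeasure]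
    [IsProbabilityMeasure μ] : μ.IsMulRightInvariant where
  map_mul_right_eq_self g :=
    haveI := isProbabilityMeasure_map (μ := μ) (measurable_mul_const g).aemeasurable
    isHaarMeasure_eq_of_isProbabilityMeasure _ μ

lemma MonoidHom.star_map_of_forall_mem_unitary {G A : Type*} [Group G] [Monoid A] [StarMul A]
    (ρ : G →* A) (hρ : ∀ g, ρ g ∈ unitary A) (g : G) : star (ρ g) = ρ g⁻¹ :=
  left_inv_eq_right_inv (Unitary.star_mul_self_of_mem (hρ g))
    (by rw [← map_mul, mul_inv_cancel, map_one])

lemma ContinuousLinearMap.lipschitzWith_one_of_mem_unitary {𝕜 H : Type*} [RCLike 𝕜]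
    [NormedAddCommGroup H] [InnerProductSpace 𝕜 H] [CompleteSpace H] {u : H →L[𝕜] H}
    (hu : u ∈ unitary (H →L[𝕜] H)) : LipschitzWith 1 u :=
  (AddMonoidHomClass.isometry_of_norm u (u.norm_map_of_mem_unitary hu)).lipschitz

namespace Representation

variable {G V V' : Type*} [Group G]
  [NormedAddCommGroup V] [InnerProductSpace ℂ V] [NormedAddCommGroup V'] [InnerProductSpace ℂ V']
  (π : G →* (V →L[ℂ] V)) (π' : G →* (V' →L[ℂ] V'))

def equivarianceDefect (T : V → V') (g : G) (v : V) : V' :=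
  π' g (T v) - T (π g v)

noncomputable def smoothing [MeasurableSpace G] [CompleteSpace V'] (μ : Measure G) (T : V → V')
    (v : V) : V' :=
  ∫ g, star (π' g) (T (π g v)) ∂μ

variable {π π'}

lemma equivarianceDefect_sub (T S : V → V') (g : G) :
    equivarianceDefect π π' (T - S) g =
      equivarianceDefect π π' T g - equivarianceDefect π π' S g := by
  ext v
  simp only [equivarianceDefect, Pi.sub_apply, map_sub]
  abel

lemma lipschitzWith_equivarianceDefect [CompleteSpace V] [CompleteSpace V'] {S : V → V'}
    {K : ℝ≥0} {g : G} (hπ : π g ∈ unitary (V →L[ℂ] V)) (hπ' : π' g ∈ unitary (V' →L[ℂ] V'))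
    (hS : LipschitzWith K S) : LipschitzWith (2 * K) (equivarianceDefect π π' S g) := by
  have h := ((π' g).lipschitzWith_one_of_mem_unitary hπ').comp hS |>.sub
    (hS.comp ((π g).lipschitzWith_one_of_mem_unitary hπ))
  rwa [one_mul, mul_one, ← two_mul] at h

variable [MeasurableSpace G] [MeasurableMul G] [CompleteSpace V'] {μ : Measure G}
  [μ.IsMulRightInvariant]

lemma smoothing_apply_map (hπ' : ∀ g, π' g ∈ unitary (V' →L[ℂ] V')) (T : V → V') (g : G)
    (v : V) : smoothing π π' μ T (π g v) = π' g (smoothing π π' μ T v) := by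
  let u : V' ≃L[ℂ] V' := (Unitary.linearIsometryEquiv ⟨π' g, hπ' g⟩).toContinuousLinearEquiv
  calc smoothing π π' μ T (π g v)
      = ∫ h, star (π' (h * g * g⁻¹)) (T (π (h * g) v)) ∂μ := by
        simp only [smoothing, mul_inv_cancel_right, map_mul, mul_apply_eq_comp]
    _ = ∫ h, star (π' (h * g⁻¹)) (T (π h v)) ∂μ :=
        integral_mul_right_eq_self (fun h ↦ star (π' (h * g⁻¹)) (T (π h v))) g
    _ = ∫ h, u (star (π' h) (T (π h v))) ∂μ := by
        simp only [map_mul, star_mul, π'.star_map_of_forall_mem_unitary hπ', inv_inv]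
        rfl
    _ = π' g (smoothing π π' μ T v) := u.integral_comp_comm _

lemma equivarianceDefect_smoothing (hπ' : ∀ g, π' g ∈ unitary (V' →L[ℂ] V')) (T : V → V')
    (g : G) : equivarianceDefect π π' (smoothing π π' μ T) g = 0 := by
  ext v
  simp [equivarianceDefect, smoothing_apply_map hπ']

end Representation

open Representation in
theorem projection_controls_defect_general
    {G : Type*} [Group G] [TopologicalSpace G] [IsTopologicalGroup G]
    [CompactSpace G] [MeasurableSpace G] [BorelSpace G]
    (μ : Measure G) [μ.IsHaarMeasure] [IsProbabilityMeasure μ]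
    {V V' : Type*}
    [NormedAddCommGroup V] [InnerProductSpace ℂ V] [FiniteDimensional ℂ V]
    [NormedAddCommGroup V'] [InnerProductSpace ℂ V'] [FiniteDimensional ℂ V']
    (π : G →* (V →L[ℂ] V)) (π' : G →* (V' →L[ℂ] V'))
    (hπu : ∀ g, π g ∈ unitary (V →L[ℂ] V))
    (hπ'u : ∀ g, π' g ∈ unitary (V' →L[ℂ] V'))
    (T : V → V')
    (K : ℝ≥0)
    (hK : LipschitzWith K fun v => T v - ∫ g, star (π' g) (T (π g v)) ∂μ)
    (g : G) :
    LipschitzWith (2 * K) fun v => π' g (T v) - T (π g v) := by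
  have := μ.isMulRightInvariant_of_isProbabilityMeasure
  have h := lipschitzWith_equivarianceDefect (S := T - smoothing π π' μ T) (hπu g) (hπ'u g) hK
  rwa [equivarianceDefect_sub, equivarianceDefect_smoothing hπ'u, sub_zero] at h

/-- upper half of Lemma 3.2.  Let `T : V → V'` be continuous, with
`G`-smoothing `P(T) v = ∫ g, π'(g)* (T (π g v)) dμ(g)` and defect
`Δ_g(T) = π'(g) ∘ T − T ∘ π(g)`.  If `T − P(T)` is `K`-Lipschitz, then every `Δ_g(T)` is
`2K`-Lipschitz. -/
theorem projection_controls_defect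
    {G : Type*} [Group G] [TopologicalSpace G] [IsTopologicalGroup G]
    [CompactSpace G] [MeasurableSpace G] [BorelSpace G]
    (μ : Measure G) [μ.IsHaarMeasure] [IsProbabilityMeasure μ]
    {V V' : Type*}
    [NormedAddCommGroup V] [InnerProductSpace ℂ V] [FiniteDimensional ℂ V]
    [NormedAddCommGroup V'] [InnerProductSpace ℂ V'] [FiniteDimensional ℂ V']
    (π : G →* (V →L[ℂ] V)) (π' : G →* (V' →L[ℂ] V'))
    (hπc : Continuous fun g => π g) (hπ'c : Continuous fun g => π' g)
    (hπu : ∀ g, π g ∈ unitary (V →L[ℂ] V))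
    (hπ'u : ∀ g, π' g ∈ unitary (V' →L[ℂ] V'))
    (T : V → V') (hT : Continuous T)
    (K : ℝ≥0)
    (hK : LipschitzWith K fun v => T v - ∫ g, star (π' g) (T (π g v)) ∂μ)
    (g : G) :
    LipschitzWith (2 * K) fun v => π' g (T v) - T (π g v) :=
  projection_controls_defect_general μ π π' hπu hπ'u T K hK g
end
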